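/- arXiv:1503.06553 — 2 statements merged into one kernel-verified Lean document; each statement's English description precedes it below -/
import Mathlib

section
/- Let u₁,…,uₙ be continuous real-valued functions on [0,∞). The moment space M(u₁,…,uₙ), consisting of all points (c₁,…,cₙ) ∈ ℝⁿ for which there exists a finite nonnegative Borel measure μ on [0,∞) with each u_k absolutely μ-integrable and c_k = ∫₀^∞ u_k(t) dμ(t) for k = 1,…,n, coincides with the convex cone generated by the curve C(u₁,…,uₙ) = { (u₁(t),…,uₙ(t)) : t ∈ [0,∞) }. -/
open Set MeasureTheory

noncomputable section

/-- The `k`-th derivative of `x` on the half-line `ℝ₋ = (-∞, 0]`. -/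
def dIic (k : ℕ) (x : ℝ → ℝ) : ℝ → ℝ :=
  iteratedDerivWithin k x (Set.Iic 0)

/-- The uniform (`L_∞`) norm of `f` on `ℝ₋ = (-∞, 0]`. -/
def unorm (f : ℝ → ℝ) : ℝ :=
  sSup ((fun t => |f t|) '' Set.Iic 0)

/-- `x` is absolutely monotone on `ℝ₋`: infinitely differentiable on `ℝ₋`, and `x` together
with all its derivatives is nonnegative on `ℝ₋`. -/
def IsAM (x : ℝ → ℝ) : Prop :=
  ContDiffOn ℝ (⊤ : ℕ∞) x (Set.Iic 0) ∧
    ∀ k : ℕ, ∀ t ∈ Set.Iic (0 : ℝ), 0 ≤ dIic k x t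

/-- `y` belongs to the class `L^{r,∪}_{∞,∞}(ℝ₋)`: `y ∈ L_∞(ℝ₋)`, `y⁽ʳ⁾ ∈ L_∞(ℝ₋)`, and for
each `k < r` the derivative `y⁽ᵏ⁾` is nondecreasing and convex on `ℝ₋`. -/
def IsLcup (r : ℕ) (y : ℝ → ℝ) : Prop :=
  BddAbove ((fun t => |y t|) '' Set.Iic 0) ∧
    BddAbove ((fun t => |dIic r y t|) '' Set.Iic 0) ∧
    ∀ k < r, MonotoneOn (dIic k y) (Set.Iic 0) ∧ ConvexOn ℝ (Set.Iic 0) (dIic k y)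

/-- The `L^{r,∪}_{∞,∞}(ℝ₋)`-ideal spline of order `r` with knots `-a 0, …, -a (m-1)`. -/
def splineL (r : ℕ) {m : ℕ} (a lam : Fin m → ℝ) : ℝ → ℝ :=
  fun t => (1 / (r.factorial : ℝ)) * ∑ s, lam s * max (a s + t) 0 ^ r

/-- The `AM(ℝ₋)`-ideal spline of order `r` with knots `-a 0, …, -a (m-1)`. -/
def splineAM (r : ℕ) {m : ℕ} (a lam : Fin m → ℝ) : ℝ → ℝ :=
  fun t => ∑ s, lam s * a s ^ r * Real.exp (t / a s)

/-- The class `X`: `AM(ℝ₋)` if `b = true`, `L^{r,∪}_{∞,∞}(ℝ₋)` if `b = false`. -/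
def IsX (b : Bool) (r : ℕ) : (ℝ → ℝ) → Prop :=
  fun x => if b then IsAM x else IsLcup r x

/-- The `X`-ideal spline for the class encoded by `b`. -/
def splineX (b : Bool) (r : ℕ) {m : ℕ} (a lam : Fin m → ℝ) : ℝ → ℝ :=
  if b then splineAM r a lam else splineL r a lam

/-- `A_k(X)`: the set of (nonzero) admissible tuples of positive reals for class `X`
and orders `k`. -/
def Ak {d : ℕ} (X : (ℝ → ℝ) → Prop) (k : Fin d → ℕ) : Set (Fin d → ℝ) :=
  {M | (∀ i, 0 < M i) ∧ ∃ x, X x ∧ ∀ i, unorm (dIic (k i) x) = M i}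

/-- The moment space `M(u 0, …, u (n-1))` for the system `u` on `[0, ∞)`. -/
def momentSpace (n : ℕ) (u : Fin n → ℝ → ℝ) : Set (Fin n → ℝ) :=
  {c | ∃ μ : Measure ℝ, IsFiniteMeasure μ ∧ μ (Set.Iio 0) = 0 ∧
    (∀ k, Integrable (u k) μ) ∧ ∀ k, c k = ∫ t, u k t ∂μ}

/-- The index of a representation with roots `t`: roots `t j > 0` count as `1`,
the root `t j = 0` counts as `1/2`. -/
def momRepIndex {m : ℕ} (t : Fin m → ℝ) : ℝ :=
  ∑ j, if t j = 0 then (1 / 2 : ℝ) else 1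

/-- The set of indices of representations of `c` with respect to the system `t ↦ t ^ k i`. -/
def indexSet (d : ℕ) (k : Fin d → ℕ) (c : Fin d → ℝ) : Set ℝ :=
  {I | ∃ (m : ℕ) (a t : Fin m → ℝ), (∀ j, 0 < a j) ∧ (∀ j, 0 ≤ t j) ∧
    Function.Injective t ∧ (∀ i, c i = ∑ j, a j * t j ^ k i) ∧ I = momRepIndex t}

/-- The index `I(c)` of a point of the moment space. -/
def momIndex (d : ℕ) (k : Fin d → ℕ) (c : Fin d → ℝ) : ℝ :=
  sInf (indexSet d k c)

section Stmt2Aux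
namespace Stmt2Aux

variable {n : ℕ}


def curveMap (u : Fin n → ℝ → ℝ) (t : ℝ) : Fin n → ℝ := fun i => u i t

def Kcone (u : Fin n → ℝ → ℝ) (S : Set ℝ) : Set (Fin n → ℝ) :=
  {x | ∃ (m : ℕ) (a t : Fin m → ℝ), (∀ j, 0 ≤ a j) ∧ (∀ j, t j ∈ S) ∧
       x = ∑ j, a j • curveMap u (t j)}

theorem Kcone.zero_mem (u : Fin n → ℝ → ℝ) (S : Set ℝ) : (0 : Fin n → ℝ) ∈ Kcone u S :=
  ⟨0, ![], ![], by simp, by simp, by simp⟩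

theorem Kcone.curve_mem (u : Fin n → ℝ → ℝ) {S : Set ℝ} {t : ℝ} (ht : t ∈ S) :
    curveMap u t ∈ Kcone u S :=
  ⟨1, fun _ => 1, fun _ => t, fun _ => zero_le_one, fun _ => ht, by simp⟩

theorem Kcone.smul_mem (u : Fin n → ℝ → ℝ) (S : Set ℝ) {r : ℝ} (hr : 0 ≤ r)
    {x : Fin n → ℝ} (hx : x ∈ Kcone u S) : r • x ∈ Kcone u S := by
  obtain ⟨m, a, t, ha, ht, rfl⟩ := hx
  exact ⟨m, fun j => r * a j, t, fun j => mul_nonneg hr (ha j), ht, by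
    rw [Finset.smul_sum]; exact Finset.sum_congr rfl fun j _ => by rw [mul_smul]⟩

theorem Kcone.add_mem (u : Fin n → ℝ → ℝ) (S : Set ℝ) {x y : Fin n → ℝ}
    (hx : x ∈ Kcone u S) (hy : y ∈ Kcone u S) : x + y ∈ Kcone u S := by
  obtain ⟨m₁, a₁, t₁, ha₁, ht₁, rfl⟩ := hx
  obtain ⟨m₂, a₂, t₂, ha₂, ht₂, rfl⟩ := hy
  refine ⟨m₁ + m₂, Fin.append a₁ a₂, Fin.append t₁ t₂, ?_, ?_, ?_⟩
  · intro j
    refine Fin.addCases (fun i => ?_) (fun i => ?_) j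
    · rw [Fin.append_left]; exact ha₁ i
    · rw [Fin.append_right]; exact ha₂ i
  · intro j
    refine Fin.addCases (fun i => ?_) (fun i => ?_) j
    · rw [Fin.append_left]; exact ht₁ i
    · rw [Fin.append_right]; exact ht₂ i
  · rw [Fin.sum_univ_add]
    congr 1 <;> exact Finset.sum_congr rfl fun j _ => by
      simp [Fin.append_left, Fin.append_right]

theorem Kcone.convex (u : Fin n → ℝ → ℝ) (S : Set ℝ) : Convex ℝ (Kcone u S) :=
  fun x hx y hy a b ha hb _ =>
    Kcone.add_mem u S (Kcone.smul_mem u S ha hx) (Kcone.smul_mem u S hb hy)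


theorem Kcone.mono {n : ℕ} (u : Fin n → ℝ → ℝ) {S S' : Set ℝ} (h : S' ⊆ S) :
    Kcone u S' ⊆ Kcone u S := by
  rintro x ⟨m, a, t, ha, ht, rfl⟩
  exact ⟨m, a, t, ha, fun j => h (ht j), rfl⟩

theorem Kcone.sub_span {n : ℕ} (u : Fin n → ℝ → ℝ) (S : Set ℝ) :
    Kcone u S ⊆ (Submodule.span ℝ (curveMap u '' S) : Set (Fin n → ℝ)) := by
  rintro x ⟨m, a, t, ha, ht, rfl⟩
  exact Submodule.sum_mem _ fun j _ =>
    Submodule.smul_mem _ _ (Submodule.subset_span ⟨t j, ht j, rfl⟩)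

theorem easy_dir (n : ℕ) (u : Fin n → ℝ → ℝ) (hu : ∀ k, ContinuousOn (u k) (Set.Ici 0))
    (m : ℕ) (a t : Fin m → ℝ) (ha : ∀ j, 0 ≤ a j) (ht : ∀ j, 0 ≤ t j) :
    ∃ μ : Measure ℝ, IsFiniteMeasure μ ∧ μ (Set.Iio 0) = 0 ∧
      (∀ k, Integrable (u k) μ) ∧ ∀ k, (∑ j, a j * u k (t j)) = ∫ s, u k s ∂μ := by
  classical
  set μ : Measure ℝ := ∑ j : Fin m, (ENNReal.ofReal (a j)) • Measure.dirac (t j) with hμ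
  -- the modified continuous functions
  have hgc : ∀ k : Fin n, Continuous fun s : ℝ => u k (max s 0) := by
    intro k
    have hmax : Continuous fun s : ℝ => max s 0 := continuous_id.max continuous_const
    have h2 := ContinuousOn.comp (g := u k) (f := fun s : ℝ => max s 0)
      (s := Set.univ) (hu k) hmax.continuousOn
      (fun s _ => Set.mem_Ici.mpr (le_max_right s 0))
    exact continuousOn_univ.mp h2
  set g : Fin n → ℝ → ℝ := fun k s => u k (max s 0) with hg
  have hgu : ∀ k (s : ℝ), 0 ≤ s → g k s = u k s := by
    intro k s hs; rw [hg]; simp only []; rw [max_eq_left hs]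
  have hIio : μ (Set.Iio 0) = 0 := by
    rw [hμ, Measure.coe_finset_sum, Finset.sum_apply, Finset.sum_eq_zero]
    intro j _
    rw [Measure.smul_apply, Measure.dirac_apply' _ measurableSet_Iio,
      Set.indicator_of_notMem (by simpa using ht j)]
    simp
  have haeq : ∀ k, u k =ᵐ[μ] g k := by
    intro k
    refine measure_mono_null (fun s hs => ?_) hIio
    simp only [Set.mem_setOf_eq, Set.mem_compl_iff] at hs ⊢
    by_contra h
    exact hs (hgu k s (not_lt.1 (fun h' => h (Set.mem_Iio.2 h')))).symm
  have hdint : ∀ (f : ℝ → ℝ), Continuous f → ∀ j : Fin m,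
      Integrable f ((ENNReal.ofReal (a j)) • Measure.dirac (t j)) := by
    intro f hf j
    refine Integrable.smul_measure ?_ ENNReal.ofReal_ne_top
    exact (integrable_congr (ae_eq_dirac' hf.measurable)).2 (integrable_const _)
  have hgint : ∀ k, Integrable (g k) μ := by
    intro k
    rw [hμ, integrable_finset_sum_measure]
    intro j _; exact hdint _ (hgc k) j
  refine ⟨μ, ?_, hIio, fun k => (integrable_congr (haeq k)).2 (hgint k), fun k => ?_⟩
  · constructor
    rw [hμ, Measure.coe_finset_sum, Finset.sum_apply]
    refine ENNReal.sum_lt_top.2 fun j _ => ?_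
    rw [Measure.smul_apply]
    simp [Measure.dirac_apply' _ MeasurableSet.univ]
  · rw [integral_congr_ae (haeq k), hμ,
      integral_finset_sum_measure (fun j _ => hdint _ (hgc k) j)]
    refine Finset.sum_congr rfl fun j _ => ?_
    rw [integral_smul_measure, integral_dirac' _ _ (hgc k).stronglyMeasurable,
      ENNReal.toReal_ofReal (ha j), smul_eq_mul]
    rw [max_eq_left (ht j)]


variable {E : Type*} [NormedAddCommGroup E] [NormedSpace ℝ E] [FiniteDimensional ℝ E]

theorem sep (D : Set E) (K : Set E) (hK : Convex ℝ K) (hDK : D ⊆ K) (h0K : (0:E) ∈ K)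
    (hKV : K ⊆ (Submodule.span ℝ D : Set E))
    (hcone : ∀ r : ℝ, 0 ≤ r → ∀ x ∈ K, r • x ∈ K) (c : E)
    (hc : c ∈ closure K) (hcK : c ∉ K) :
    ∃ F : E →L[ℝ] ℝ, (∀ x ∈ K, F x ≤ 0) ∧ F c = 0 ∧
      ∃ v ∈ Submodule.span ℝ D, F v ≠ 0 := by
  classical
  set V : Submodule ℝ E := Submodule.span ℝ D with hVdef
  have hDV : D ⊆ (V : Set E) := Submodule.subset_span
  have hVclosed : IsClosed (V : Set E) := Submodule.closed_of_finiteDimensional V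
  have hcV : c ∈ V := by
    have : closure K ⊆ closure (V : Set E) := closure_mono hKV
    rw [hVclosed.closure_eq] at this
    exact this hc
  set K₀ : Set V := ((↑) : V → E) ⁻¹' K with hK₀def
  have hK₀conv : Convex ℝ K₀ := hK.linear_preimage V.subtype
  have hembed : Topology.IsEmbedding ((↑) : V → E) := Topology.IsEmbedding.subtypeVal
  have himg : (Subtype.val '' K₀ : Set E) = K := by
    apply Set.Subset.antisymm (Set.image_preimage_subset _ _)
    intro x hx
    exact ⟨⟨x, hKV hx⟩, hx, rfl⟩
  have hclosK₀ : closure K₀ = ((↑) : V → E) ⁻¹' closure K := by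
    rw [hembed.closure_eq_preimage_closure_image, himg]
  set c₀ : V := ⟨c, hcV⟩ with hc₀def
  have hc₀cl : c₀ ∈ closure K₀ := by rw [hclosK₀]; exact hc
  have hc₀K : c₀ ∉ K₀ := hcK
  have h0K₀ : (0 : V) ∈ K₀ := by simpa [hK₀def] using h0K
  -- K₀ is a cone
  have hcone₀ : ∀ r : ℝ, 0 ≤ r → ∀ x ∈ K₀, r • x ∈ K₀ := by
    intro r hr x hx
    have := hcone r hr _ hx
    simpa [hK₀def] using this
  -- span of K₀ is top
  have hspan : Submodule.span ℝ K₀ = ⊤ := by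
    rw [eq_top_iff]
    have h1 : Submodule.map V.subtype (Submodule.span ℝ K₀) = V := by
      rw [Submodule.map_span]
      apply le_antisymm
      · rw [Submodule.span_le]
        intro x hx
        obtain ⟨y, hy, rfl⟩ := hx
        exact hKV hy
      · show Submodule.span ℝ D ≤ _
        rw [Submodule.span_le]
        intro x hx
        exact Submodule.subset_span ⟨⟨x, hDV hx⟩, hDK hx, rfl⟩
    intro x _
    have hx : (x : E) ∈ Submodule.map V.subtype (Submodule.span ℝ K₀) := by
      rw [h1]; exact x.2
    obtain ⟨y, hy, hyx⟩ := hx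
    have : y = x := Subtype.ext hyx
    rwa [← this]
  have haff : affineSpan ℝ K₀ = ⊤ := by
    have h1 : affineSpan ℝ K₀ = affineSpan ℝ (insert 0 K₀) := by
      rw [Set.insert_eq_of_mem h0K₀]
    rw [← AffineSubspace.coe_eq_univ_iff, h1, affineSpan_insert_zero, hspan,
      Submodule.top_coe]
  -- nonempty interior and separation
  obtain ⟨a, ha⟩ := hK₀conv.interior_nonempty_iff_affineSpan_eq_top.2 haff
  obtain ⟨f, hf⟩ := geometric_hahn_banach_open_point (hK₀conv.interior) isOpen_interior
    (fun h => hc₀K (interior_subset h))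
  -- f ≤ f c₀ on the closure of K₀
  have hlim : ∀ x ∈ closure K₀, f x ≤ f c₀ := by
    intro x hx
    have hseq : ∀ k : ℕ, (1/(k+1:ℝ)) * f a + (1 - 1/(k+1:ℝ)) * f x < f c₀ := by
      intro k
      have hk0 : (0:ℝ) < 1/(k+1:ℝ) := by positivity
      have hk1 : (0:ℝ) ≤ 1 - 1/(k+1:ℝ) := by
        have : (1:ℝ)/(k+1:ℝ) ≤ 1 := by
          rw [div_le_one (by positivity)]
          linarith [Nat.cast_nonneg (α := ℝ) k]
        linarith
      have hmem : (1/(k+1:ℝ)) • a + (1 - 1/(k+1:ℝ)) • x ∈ interior K₀ :=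
        hK₀conv.combo_interior_closure_mem_interior ha hx hk0 hk1 (by ring)
      have := hf _ hmem
      simpa [map_add, _root_.map_smul, smul_eq_mul] using this
    have htend : Filter.Tendsto (fun k : ℕ => (1/(k+1:ℝ)) * f a + (1 - 1/(k+1:ℝ)) * f x)
        Filter.atTop (nhds (0 * f a + (1 - 0) * f x)) := by
      apply Filter.Tendsto.add
      · exact tendsto_one_div_add_atTop_nhds_zero_nat.mul tendsto_const_nhds
      · exact ((tendsto_const_nhds.sub
          tendsto_one_div_add_atTop_nhds_zero_nat).mul tendsto_const_nhds)
    have : (0:ℝ) * f a + (1 - 0) * f x = f x := by ring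
    rw [this] at htend
    exact le_of_tendsto htend (Filter.Eventually.of_forall fun k => (hseq k).le)
  have hfc₀nonneg : 0 ≤ f c₀ := by
    have := hlim 0 (subset_closure h0K₀)
    simpa using this
  -- f ≤ 0 on K₀
  have hneg : ∀ x ∈ K₀, f x ≤ 0 := by
    intro x hx
    by_contra h
    push_neg at h
    have hr : (0:ℝ) ≤ (f c₀ + 1) / f x := by positivity
    have hmem : ((f c₀ + 1) / f x) • x ∈ K₀ := hcone₀ _ hr x hx
    have := hlim _ (subset_closure hmem)
    rw [_root_.map_smul, smul_eq_mul, div_mul_cancel₀ _ h.ne'] at this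
    linarith
  have hfc₀ : f c₀ = 0 := by
    refine le_antisymm ?_ hfc₀nonneg
    have : closure K₀ ⊆ {y : V | f y ≤ 0} := by
      apply closure_minimal _ (isClosed_le (by fun_prop) continuous_const)
      exact hneg
    exact this hc₀cl
  have hfa : f a < 0 := hfc₀ ▸ hf a ha
  -- extend f to E
  obtain ⟨F, hFext, -⟩ := exists_extension_norm_eq V f
  refine ⟨F, ?_, ?_, ⟨a, a.2, ?_⟩⟩
  · intro x hx
    have := hFext ⟨x, hKV hx⟩
    rw [this]
    exact hneg _ hx
  · rw [hFext c₀]; exact hfc₀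
  · rw [hFext a]; exact hfa.ne


theorem key_step (n : ℕ) (u : Fin n → ℝ → ℝ) (hu : ∀ k, Continuous (u k))
    (S : Set ℝ) (hS : IsClosed S) (μ : Measure ℝ) [IsFiniteMeasure μ] (hSc : μ Sᶜ = 0)
    (hint : ∀ k, Integrable (u k) μ) :
    (fun i => ∫ s, u i s ∂μ) ∈ Kcone u S ∨
    ∃ S' : Set ℝ, S' ⊆ S ∧ IsClosed S' ∧ μ S'ᶜ = 0 ∧
      Module.finrank ℝ (Submodule.span ℝ (curveMap u '' S')) <
      Module.finrank ℝ (Submodule.span ℝ (curveMap u '' S)) := by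
  classical
  have hcurvemeas : Continuous (curveMap u) := continuous_pi fun i => hu i
  have hcurveint : Integrable (curveMap u) μ := by
    refine Integrable.mono' (g := fun t => ∑ j, |u j t|)
      (integrable_finset_sum Finset.univ (fun i _ => (hint i).abs))
      hcurvemeas.aestronglyMeasurable ?_
    refine Filter.Eventually.of_forall fun t => ?_
    rw [pi_norm_le_iff_of_nonneg (Finset.sum_nonneg fun i _ => abs_nonneg _)]
    intro i
    calc ‖curveMap u t i‖ = |u i t| := rfl
      _ ≤ ∑ j, |u j t| := Finset.single_le_sum (f := fun j => |u j t|) (fun j _ => abs_nonneg _) (Finset.mem_univ i)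
  have hcomp : ∀ i, ∫ s, u i s ∂μ = (∫ s, curveMap u s ∂μ) i := by
    intro i
    have := (ContinuousLinearMap.proj (R := ℝ) (φ := fun _ : Fin n => ℝ) i).integral_comp_comm
      hcurveint
    simpa [curveMap] using this
  set c : Fin n → ℝ := fun i => ∫ s, u i s ∂μ with hcdef
  have hcvec : (∫ s, curveMap u s ∂μ) = c := funext fun i => (hcomp i).symm
  rcases eq_or_ne μ 0 with rfl | hμ0
  · left
    have : c = 0 := by funext i; simp [hcdef]
    rw [this]; exact Kcone.zero_mem u S
  haveI : NeZero μ := ⟨hμ0⟩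
  have haeS : ∀ᵐ t ∂μ, t ∈ S := mem_ae_iff.2 hSc
  have havg : (⨍ s, curveMap u s ∂μ) ∈ closure (Kcone u S) := by
    refine Convex.average_mem ((Kcone.convex u S).closure) isClosed_closure ?_ hcurveint
    exact haeS.mono fun t ht => subset_closure (Kcone.curve_mem u ht)
  have hc_cl : c ∈ closure (Kcone u S) := by
    have hcc : c = (μ Set.univ).toReal • ⨍ s, curveMap u s ∂μ := by
      rw [← measureReal_def, measure_smul_average, hcvec]
    rw [hcc]
    exact map_mem_closure (continuous_const_smul _) havg
      (fun z hz => Kcone.smul_mem u S ENNReal.toReal_nonneg hz)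
  by_cases hcK : c ∈ Kcone u S
  · exact Or.inl hcK
  right
  obtain ⟨F, hF1, hF2, v, hvV, hvF⟩ := sep (curveMap u '' S) (Kcone u S) (Kcone.convex u S)
    (fun x hx => by obtain ⟨t, ht, rfl⟩ := hx; exact Kcone.curve_mem u ht)
    (Kcone.zero_mem u S) (Kcone.sub_span u S)
    (fun r hr x hx => Kcone.smul_mem u S hr hx) c hc_cl hcK
  set g : ℝ → ℝ := fun t => -(F (curveMap u t)) with hgdef
  have hgc : Continuous g := (F.continuous.comp hcurvemeas).neg
  have hgint : Integrable g μ := (F.integrable_comp hcurveint).neg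
  have hgnonneg : 0 ≤ᵐ[μ] g :=
    haeS.mono fun t ht => neg_nonneg.2 (hF1 _ (Kcone.curve_mem u ht))
  have hgzero : ∫ t, g t ∂μ = 0 := by
    rw [integral_neg, ContinuousLinearMap.integral_comp_comm F hcurveint, hcvec, hF2, neg_zero]
  have hga : g =ᵐ[μ] 0 := (integral_eq_zero_iff_of_nonneg_ae hgnonneg hgint).1 hgzero
  set S' : Set ℝ := S ∩ (fun t => F (curveMap u t)) ⁻¹' {0} with hS'def
  refine ⟨S', Set.inter_subset_left,
    hS.inter (isClosed_singleton.preimage (F.continuous.comp hcurvemeas)), ?_, ?_⟩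
  · have h1 : μ {t | ¬ g t = 0} = 0 := by
      have := hga
      rw [Filter.EventuallyEq, ae_iff] at this
      simpa using this
    refine measure_mono_null (fun t ht => ?_) (measure_union_null hSc h1)
    by_cases h : t ∈ S
    · right
      intro h0
      exact ht ⟨h, by simpa [hgdef] using h0⟩
    · exact Or.inl h
  · have hsub : Submodule.span ℝ (curveMap u '' S') ≤
        Submodule.span ℝ (curveMap u '' S) ⊓ LinearMap.ker (F : (Fin n → ℝ) →ₗ[ℝ] ℝ) := by
      rw [Submodule.span_le]
      rintro x ⟨t, ht, rfl⟩
      exact ⟨Submodule.subset_span ⟨t, ht.1, rfl⟩, ht.2⟩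
    have hlt : Submodule.span ℝ (curveMap u '' S) ⊓ LinearMap.ker (F : (Fin n → ℝ) →ₗ[ℝ] ℝ) <
        Submodule.span ℝ (curveMap u '' S) := by
      refine lt_of_le_of_ne inf_le_left fun h => ?_
      have hv2 : v ∈ Submodule.span ℝ (curveMap u '' S) ⊓ LinearMap.ker (F : (Fin n → ℝ) →ₗ[ℝ] ℝ) := by
        rw [h]; exact hvV
      exact hvF hv2.2
    exact lt_of_le_of_lt (Submodule.finrank_mono hsub) (Submodule.finrank_lt_finrank_of_lt hlt)

theorem hard_aux (d : ℕ) : ∀ (n : ℕ) (u : Fin n → ℝ → ℝ), (∀ k, Continuous (u k)) →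
    ∀ (S : Set ℝ), IsClosed S → ∀ (μ : Measure ℝ), IsFiniteMeasure μ → μ Sᶜ = 0 →
    (∀ k, Integrable (u k) μ) →
    Module.finrank ℝ (Submodule.span ℝ (curveMap u '' S)) ≤ d →
    (fun i => ∫ s, u i s ∂μ) ∈ Kcone u S := by
  induction d with
  | zero =>
    intro n u hu S hS μ hfin hSc hint hrank
    haveI := hfin
    rcases key_step n u hu S hS μ hSc hint with h | ⟨S', _, _, _, hlt⟩
    · exact h
    · omega
  | succ d ih =>
    intro n u hu S hS μ hfin hSc hint hrank
    haveI := hfin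
    rcases key_step n u hu S hS μ hSc hint with h | ⟨S', hsub, hS', hSc', hlt⟩
    · exact h
    · have h1 : Module.finrank ℝ (Submodule.span ℝ (curveMap u '' S')) ≤ d := by omega
      exact Kcone.mono u hsub (ih n u hu S' hS' μ hfin hSc' hint h1)


end Stmt2Aux
end Stmt2Aux

open Stmt2Aux in
/-- the moment space `M(u₁,…,uₙ)` coincides with the convex cone generated by
the curve `C(u₁,…,uₙ) = {(u₁ t, …, uₙ t) : t ∈ [0,∞)}`, i.e. the set of all finite
nonnegative combinations of points of the curve. -/
theorem statement2 (n : ℕ) (u : Fin n → ℝ → ℝ) (hu : ∀ k, ContinuousOn (u k) (Set.Ici 0)) :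
    momentSpace n u =
      {c | ∃ (m : ℕ) (a t : Fin m → ℝ), (∀ j, 0 ≤ a j) ∧ (∀ j, 0 ≤ t j) ∧
        ∀ i, c i = ∑ j, a j * u i (t j)} := by
  ext c
  simp only [momentSpace, Set.mem_setOf_eq]
  constructor
  · rintro ⟨μ, hfin, hIio, hint, hc⟩
    haveI := hfin
    have hvc : ∀ k : Fin n, Continuous fun s : ℝ => u k (max s 0) := by
      intro k
      have hmax : Continuous fun s : ℝ => max s 0 := continuous_id.max continuous_const
      have h2 := ContinuousOn.comp (g := u k) (f := fun s : ℝ => max s 0)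
        (s := Set.univ) (hu k) hmax.continuousOn
        (fun s _ => Set.mem_Ici.mpr (le_max_right s 0))
      exact continuousOn_univ.mp h2
    set v : Fin n → ℝ → ℝ := fun k s => u k (max s 0) with hvdef
    have haeq : ∀ k, u k =ᵐ[μ] v k := by
      intro k
      refine measure_mono_null (fun s hs => ?_) hIio
      simp only [Set.mem_setOf_eq, Set.mem_compl_iff] at hs ⊢
      by_contra h
      apply hs
      rw [hvdef]
      simp only []
      rw [max_eq_left (not_lt.1 (fun h' => h (Set.mem_Iio.2 h')))]
    have hvint : ∀ k, Integrable (v k) μ := fun k => (integrable_congr (haeq k)).1 (hint k)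
    have hSc : μ (Set.Ici (0:ℝ))ᶜ = 0 := by rw [Set.compl_Ici]; exact hIio
    have hmem := hard_aux (Module.finrank ℝ (Submodule.span ℝ (curveMap v '' Set.Ici 0)))
      n v hvc (Set.Ici 0) isClosed_Ici μ hfin hSc hvint le_rfl
    obtain ⟨m, a, t, ha, ht, heq⟩ := hmem
    refine ⟨m, a, t, ha, ht, fun i => ?_⟩
    have h1 : c i = ∫ s, v i s ∂μ := (hc i).trans (integral_congr_ae (haeq i))
    have h2 := congrFun heq i
    rw [h1, h2, Finset.sum_apply]
    refine Finset.sum_congr rfl fun j _ => ?_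
    simp only [Pi.smul_apply, smul_eq_mul, curveMap, hvdef]
    rw [max_eq_left (ht j)]
  · rintro ⟨m, a, t, ha, ht, hc⟩
    obtain ⟨μ, h1, h2, h3, h4⟩ := easy_dir n u hu m a t ha ht
    exact ⟨μ, h1, h2, h3, fun k => (hc k).trans (h4 k)⟩
end
end

section
/- Let u₁,…,uₙ be continuous real-valued functions on [0,∞). Every point c of the moment space M(u₁,…,uₙ) admits a representation c = Σ_{k=1}^m a_k · (u₁(t_k),…,uₙ(t_k)) with m ≤ n+1, coefficients a_k > 0, and points 0 ≤ t₁ < t₂ < … < t_m. -/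
open Set MeasureTheory

noncomputable section

open Module

/-- Dimension induction: the barycenter (assumed `0`) of a probability measure whose values
lie a.e. in `s` belongs to `convexHull ℝ s`, in a finite-dimensional inner product space. -/
lemma aux_bary (N : ℕ) : ∀ {E : Type} [NormedAddCommGroup E] [InnerProductSpace ℝ E]
    [FiniteDimensional ℝ E], finrank ℝ E ≤ N → ∀ {α : Type} [MeasurableSpace α]
    (ν : Measure α) [IsProbabilityMeasure ν] (f : α → E) (s : Set E),
    Integrable f ν → (∀ᵐ x ∂ν, f x ∈ s) → (∫ x, f x ∂ν) = 0 → (0 : E) ∈ convexHull ℝ s := by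
  induction N with
  | zero =>
    intro E _ _ _ hN α _ ν _ f s hf hs h0
    haveI : (ae ν).NeBot := ae_neBot.2 (IsProbabilityMeasure.ne_zero ν)
    obtain ⟨x, hx⟩ := hs.exists
    haveI : Subsingleton E := finrank_zero_iff.mp (Nat.le_zero.mp hN)
    have : (0 : E) = f x := Subsingleton.elim _ _
    exact this ▸ subset_convexHull ℝ s hx
  | succ N ih =>
    intro E _ _ _ hN α _ ν _ f s hf hs h0
    haveI : (ae ν).NeBot := ae_neBot.2 (IsProbabilityMeasure.ne_zero ν)
    by_cases h : (0 : E) ∈ convexHull ℝ s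
    · exact h
    exfalso
    set C : Set E := convexHull ℝ s with hCdef
    have hC : Convex ℝ C := convex_convexHull ℝ s
    have hsC : ∀ᵐ x ∂ν, f x ∈ closure C :=
      hs.mono fun x hx => subset_closure (subset_convexHull ℝ s hx)
    have hcl : (0 : E) ∈ closure C := by
      have := (hC.closure).integral_mem isClosed_closure hsC hf
      rwa [h0] at this
    -- obtain a supporting functional
    obtain ⟨ℓ, hℓy, hℓle⟩ :
        ∃ ℓ : E →L[ℝ] ℝ, (∃ y, ℓ y ≠ 0) ∧ ∀ z ∈ C, ℓ z ≤ 0 := by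
      by_cases hint : (interior C).Nonempty
      · obtain ⟨y, hy⟩ := hint
        obtain ⟨ℓ, hℓ⟩ := geometric_hahn_banach_open_point hC.interior isOpen_interior
          (fun hh => h (interior_subset hh))
        refine ⟨ℓ, ⟨y, ?_⟩, ?_⟩
        · have := hℓ y hy
          rw [map_zero] at this
          exact ne_of_lt this
        · intro z hz
          -- z ∈ C ⊆ closure C; approach z along segment from y
          have hseq : ∀ k : ℕ, (1 / ((k:ℝ) + 1)) * ℓ y + (1 - 1 / ((k:ℝ) + 1)) * ℓ z ≤ 0 := by
            intro k
            have hk1 : (0 : ℝ) < 1 / ((k:ℝ) + 1) := by positivity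
            have hk2 : (0 : ℝ) ≤ 1 - 1 / ((k:ℝ) + 1) := by
              have : (1 : ℝ) / ((k:ℝ) + 1) ≤ 1 := by
                rw [div_le_one (by positivity)]
                linarith [Nat.cast_nonneg (α := ℝ) k]
              linarith
            have hmem : (1 / ((k:ℝ) + 1)) • y + (1 - 1 / ((k:ℝ) + 1)) • z ∈ interior C :=
              hC.combo_interior_closure_mem_interior hy (subset_closure hz) hk1 hk2 (by ring)
            have := hℓ _ hmem
            rw [map_zero, map_add, _root_.map_smul, _root_.map_smul] at this
            simpa using this.le
          have htend : Filter.Tendsto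
              (fun k : ℕ => (1 / ((k:ℝ) + 1)) * ℓ y + (1 - 1 / ((k:ℝ) + 1)) * ℓ z)
              Filter.atTop (nhds (ℓ z)) := by
            have h1 : Filter.Tendsto (fun k : ℕ => (1 / ((k:ℝ) + 1))) Filter.atTop (nhds 0) :=
              tendsto_one_div_add_atTop_nhds_zero_nat
            have := ((h1.mul_const (ℓ y)).add (((tendsto_const_nhds (x := (1:ℝ))).sub h1).mul_const (ℓ z)))
            simpa using this
          exact le_of_tendsto htend (Filter.Eventually.of_forall hseq)
      · -- interior empty: C lies in a proper subspace
        have hA : affineSpan ℝ C ≠ ⊤ := fun hh =>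
          hint (hC.interior_nonempty_iff_affineSpan_eq_top.mpr hh)
        have h0A : (0 : E) ∈ affineSpan ℝ C := by
          have hclosed : IsClosed ((affineSpan ℝ C : Set E)) :=
            (affineSpan ℝ C).closed_of_finiteDimensional
          have : closure C ⊆ (affineSpan ℝ C : Set E) := by
            rw [← hclosed.closure_eq]
            exact closure_mono (subset_affineSpan ℝ C)
          exact this hcl
        set D := (affineSpan ℝ C).direction with hDdef
        have hD : D ≠ ⊤ := by
          intro hh
          exact hA ((AffineSubspace.direction_eq_top_iff_of_nonempty ⟨0, h0A⟩).mp hh)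
        have hCD : ∀ z ∈ C, z ∈ D := by
          intro z hz
          have := AffineSubspace.vsub_mem_direction (subset_affineSpan ℝ C hz) h0A
          simpa using this
        have hDo : Dᗮ ≠ ⊥ := fun hh => hD (Submodule.orthogonal_eq_bot_iff.mp hh)
        obtain ⟨v, hvD, hv0⟩ := Submodule.exists_mem_ne_zero_of_ne_bot hDo
        refine ⟨innerSL ℝ v, ⟨v, ?_⟩, ?_⟩
        · have hvv : (innerSL ℝ v) v = (inner ℝ v v : ℝ) := rfl
          rw [hvv]
          exact fun hh => hv0 (inner_self_eq_zero.mp hh)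
        · intro z hz
          have hzv : (inner ℝ v z : ℝ) = 0 := (Submodule.mem_orthogonal' D v).mp hvD z (hCD z hz)
          have hvz : (innerSL ℝ v) z = (inner ℝ v z : ℝ) := rfl
          rw [hvz, hzv]
    obtain ⟨y₀, hy₀⟩ := hℓy
    -- ℓ ∘ f = 0 a.e.
    have hcomp : Integrable (fun x => ℓ (f x)) ν := ℓ.integrable_comp hf
    have hint0 : ∫ x, ℓ (f x) ∂ν = 0 := by
      rw [ContinuousLinearMap.integral_comp_comm ℓ hf, h0, map_zero]
    have hnonneg : 0 ≤ᵐ[ν] fun x => -ℓ (f x) :=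
      hs.mono fun x hx => by
        simp only [Pi.zero_apply, neg_nonneg]
        exact hℓle _ (subset_convexHull ℝ s hx)
    have hzero : (fun x => -ℓ (f x)) =ᵐ[ν] 0 := by
      rw [← integral_eq_zero_iff_of_nonneg_ae hnonneg hcomp.neg, integral_neg, hint0, neg_zero]
    have hker : ∀ᵐ x ∂ν, f x ∈ LinearMap.ker (ℓ : E →ₗ[ℝ] ℝ) := by
      filter_upwards [hzero] with x hx
      have : ℓ (f x) = 0 := by simpa [neg_eq_zero] using hx
      simpa [LinearMap.mem_ker] using this
    set K : Submodule ℝ E := LinearMap.ker (ℓ : E →ₗ[ℝ] ℝ) with hKdef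
    have hKne : K ≠ ⊤ := by
      intro hh
      have : y₀ ∈ K := hh ▸ Submodule.mem_top
      exact hy₀ (by simpa [hKdef, LinearMap.mem_ker] using this)
    have hrank : finrank ℝ K ≤ N := by
      have h1 : finrank ℝ K < finrank ℝ E := Submodule.finrank_lt hKne
      omega
    set g : α → K := fun x => Submodule.orthogonalProjection K (f x) with hgdef
    have hg_int : Integrable g ν := (Submodule.orthogonalProjection K).integrable_comp hf
    have hgf : ∀ᵐ x ∂ν, ((g x : E)) = f x := by
      filter_upwards [hker] with x hx
      exact Submodule.starProjection_eq_self_iff.mpr hx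
    have hgs : ∀ᵐ x ∂ν, g x ∈ (Subtype.val ⁻¹' s : Set K) := by
      filter_upwards [hgf, hs] with x hx hx'
      simpa [Set.mem_preimage, hx] using hx'
    have hg0 : ∫ x, g x ∂ν = 0 := by
      have h1 : (K.subtypeL) (∫ x, g x ∂ν) = ∫ x, (g x : E) ∂ν :=
        (ContinuousLinearMap.integral_comp_comm K.subtypeL hg_int).symm
      have h2 : ∫ x, (g x : E) ∂ν = 0 := by
        rw [integral_congr_ae hgf, h0]
      have : ((∫ x, g x ∂ν : K) : E) = 0 := by
        rw [← h2, ← h1]; rfl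
      exact Subtype.coe_injective (by simpa using this)
    have h0K : (0 : K) ∈ convexHull ℝ (Subtype.val ⁻¹' s : Set K) :=
      ih hrank ν g _ hg_int hgs hg0
    have himg := (Submodule.subtype K).image_convexHull (Subtype.val ⁻¹' s : Set K)
    have : (0 : E) ∈ Subtype.val '' (convexHull ℝ (Subtype.val ⁻¹' s : Set K)) :=
      ⟨0, h0K, rfl⟩
    rw [show (Subtype.val '' (convexHull ℝ (Subtype.val ⁻¹' s : Set K)))
        = convexHull ℝ (Subtype.val '' (Subtype.val ⁻¹' s : Set K)) from himg] at this
    exact h (convexHull_mono (Set.image_preimage_subset _ _) this)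

/-- The barycenter of an a.e. `s`-valued integrable function w.r.t. a probability measure lies
in `convexHull ℝ s` (finite-dimensional inner product space). -/
lemma integral_mem_convexHull' {E : Type} [NormedAddCommGroup E] [InnerProductSpace ℝ E]
    [FiniteDimensional ℝ E] {α : Type} [MeasurableSpace α] (ν : Measure α)
    [IsProbabilityMeasure ν] (f : α → E) (s : Set E) (hf : Integrable f ν)
    (hs : ∀ᵐ x ∂ν, f x ∈ s) : (∫ x, f x ∂ν) ∈ convexHull ℝ s := by
  set I : E := ∫ x, f x ∂ν with hIdef
  have h0 : ∫ x, (-I + f x) ∂ν = 0 := by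
    rw [integral_add (integrable_const (-I)) hf]
    simp [← hIdef]
  have haem : ∀ᵐ x ∂ν, (-I + f x) ∈ (fun y => -I + y) '' s :=
    hs.mono fun x hx => Set.mem_image_of_mem _ hx
  have h0mem : (0 : E) ∈ convexHull ℝ ((fun y => -I + y) '' s) :=
    aux_bary (finrank ℝ E) le_rfl ν _ _ ((integrable_const (-I)).add hf) haem h0
  have himg : (fun y => -I + y) '' (convexHull ℝ s) = convexHull ℝ ((fun y => -I + y) '' s) :=
    (AffineEquiv.constVAdd ℝ E (-I)).toAffineMap.image_convexHull s
  rw [← himg] at h0mem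
  obtain ⟨y, hy, hy0⟩ := h0mem
  have hyI : y = I := by
    have h' : y - I = 0 := by rw [sub_eq_neg_add]; exact hy0
    exact sub_eq_zero.mp h'
  exact hyI ▸ hy

/-- every point `c` of the moment space `M(u₁,…,uₙ)` admits a representation
`c = ∑_{j=1}^m a_j • (u₁ (t j), …, uₙ (t j))` with `m ≤ n + 1`, positive coefficients and
points `0 ≤ t₁ < t₂ < … < t_m`. -/
theorem statement3 (n : ℕ) (u : Fin n → ℝ → ℝ) (hu : ∀ k, ContinuousOn (u k) (Set.Ici 0))
    (c : Fin n → ℝ) (hc : c ∈ momentSpace n u) :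
    ∃ m : ℕ, m ≤ n + 1 ∧ ∃ a t : Fin m → ℝ, (∀ j, 0 < a j) ∧ (∀ j, 0 ≤ t j) ∧
      StrictMono t ∧ ∀ i, c i = ∑ j, a j * u i (t j) := by
  obtain ⟨μ, hfin, hneg, hintg, hrep⟩ := hc
  by_cases hμ0 : μ Set.univ = 0
  · have hμ : μ = 0 := Measure.measure_univ_eq_zero.mp hμ0
    refine ⟨0, by omega, Fin.elim0, Fin.elim0, fun j => j.elim0, fun j => j.elim0,
      fun j => j.elim0, fun i => ?_⟩
    rw [hrep i, hμ]
    simp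
  · haveI := hfin
    set total : ℝ := (μ Set.univ).toReal with htotal
    have htotal_pos : 0 < total := ENNReal.toReal_pos hμ0 (measure_ne_top μ _)
    set ν : Measure ℝ := (μ Set.univ)⁻¹ • μ with hν
    have hinv_ne_top : (μ Set.univ)⁻¹ ≠ ⊤ := by
      simp [ENNReal.inv_ne_top, hμ0, pos_iff_ne_zero]
    haveI hprob : IsProbabilityMeasure ν := by
      constructor
      rw [hν, Measure.smul_apply, smul_eq_mul, ENNReal.inv_mul_cancel hμ0 (measure_ne_top μ _)]
    have hintν : ∀ k, Integrable (u k) ν := fun k => (hintg k).smul_measure hinv_ne_top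
    set E := EuclideanSpace ℝ (Fin n) with hE
    set F : ℝ → E := fun τ => ∑ k, u k τ • EuclideanSpace.single k (1 : ℝ) with hF
    have hFint : Integrable F ν :=
      integrable_finset_sum _ fun k _ => (hintν k).smul_const _
    have hproj : ∀ (i : Fin n) (τ : ℝ), EuclideanSpace.proj i (F τ) = u i τ := by
      intro i τ
      rw [hF]
      simp only [map_sum, _root_.map_smul, smul_eq_mul]
      rw [Finset.sum_eq_single i]
      · simp [PiLp.proj_apply, EuclideanSpace.single_apply]
      · intro k _ hk
        simp [PiLp.proj_apply, EuclideanSpace.single_apply, hk, Ne.symm hk]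
      · simp
    have haeIci : ∀ᵐ τ ∂ν, τ ∈ Set.Ici (0 : ℝ) := by
      have hν0 : ν (Set.Iio 0) = 0 := by
        rw [hν, Measure.smul_apply, hneg, smul_eq_mul, mul_zero]
      have hset : {a : ℝ | ¬ a ∈ Set.Ici (0 : ℝ)} = Set.Iio 0 := by
        ext a; simp [not_le]
      rw [ae_iff, hset]
      exact hν0
    have haem : ∀ᵐ τ ∂ν, F τ ∈ F '' Set.Ici 0 := haeIci.mono fun τ h => ⟨τ, h, rfl⟩
    have hbmem : (∫ τ, F τ ∂ν) ∈ convexHull ℝ (F '' Set.Ici 0) :=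
      integral_mem_convexHull' ν F _ hFint haem
    obtain ⟨ι, hι, z, w, hzs, hzaff, hwpos, hwsum, hwz⟩ :=
      eq_pos_convex_span_of_mem_convexHull hbmem
    haveI := hι
    rw [Subsingleton.elim hι ‹Fintype ι›] at hwz
    have hcard : Fintype.card ι ≤ n + 1 := by
      have h1 := hzaff.card_le_finrank_succ
      have h2 : Module.finrank ℝ (vectorSpan ℝ (Set.range z)) ≤ Module.finrank ℝ E :=
        Submodule.finrank_le _
      have h3 : Module.finrank ℝ E = n := finrank_euclideanSpace_fin
      omega
    choose τp hτp hFτp using fun j => hzs (Set.mem_range_self j)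
    have hzinj : Function.Injective z := hzaff.injective
    have hτinj : Function.Injective τp := fun j1 j2 hj =>
      hzinj (by rw [← hFτp, ← hFτp, hj])
    set m := Fintype.card ι with hm
    let e : ι ≃ Fin m := Fintype.equivFin ι
    set t0 : Fin m → ℝ := τp ∘ e.symm with ht0
    have ht0inj : Function.Injective t0 := hτinj.comp e.symm.injective
    set σ := Tuple.sort t0 with hσ
    refine ⟨m, hcard, fun j => total * w (e.symm (σ j)), t0 ∘ σ,
      fun j => mul_pos htotal_pos (hwpos _), fun j => hτp _,
      (Tuple.monotone_sort t0).strictMono_of_injective (ht0inj.comp σ.injective), fun i => ?_⟩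
    have h1 : ∫ τ, u i τ ∂ν = total⁻¹ * ∫ τ, u i τ ∂μ := by
      rw [hν, integral_smul_measure, ENNReal.toReal_inv, smul_eq_mul]
    have h2 : EuclideanSpace.proj i (∫ τ, F τ ∂ν) = ∫ τ, u i τ ∂ν := by
      rw [← ContinuousLinearMap.integral_comp_comm _ hFint]
      exact integral_congr_ae (Filter.Eventually.of_forall fun τ => hproj i τ)
    have h3 : EuclideanSpace.proj i (∫ τ, F τ ∂ν) = ∑ j : ι, w j * u i (τp j) := by
      rw [← hwz, map_sum]
      refine Finset.sum_congr rfl fun j _ => ?_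
      rw [_root_.map_smul, smul_eq_mul, ← hFτp j, hproj]
    have h4 : ∫ τ, u i τ ∂μ = total * ∑ j : ι, w j * u i (τp j) := by
      rw [← h3, h2, h1, ← mul_assoc, mul_inv_cancel₀ (ne_of_gt htotal_pos), one_mul]
    rw [hrep i, h4, Finset.mul_sum,
      ← Equiv.sum_comp (σ.trans e.symm) (fun j : ι => total * (w j * u i (τp j)))]
    refine Finset.sum_congr rfl fun j _ => ?_
    simp [mul_assoc, ht0]
end
end
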